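/- arXiv:2010.03895 — 2 statements merged into one kernel-verified Lean document; each statement's English description precedes it below -/
import Mathlib

section
/- For all natural numbers m, n, the degree of the parallelogram Zhang–Zhang polynomial equals min(m,n): natDegree(ZZM(m,n)) = min(m,n). (This is the Clar number of the parallelogram benzenoid M(m,n).) -/
open Polynomial Finset

noncomputable def ZZM (m n : ℕ) : Polynomial ℤ :=
  ∑ j ∈ Finset.range (min m n + 1),
    Polynomial.C ((m.choose j : ℤ) * (n.choose j : ℤ)) * (1 + Polynomial.X) ^ j

noncomputable def ZZRb (n₁ n₂ m₁ m₂ : ℕ) : Polynomial ℤ :=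
  (∑ k ∈ Finset.range (min n₁ m₁ + 1), ZZM (m₁ - k) (n₂ + k) * ZZM (m₂ + k) (n₁ - k))
  + Polynomial.X *
    ∑ k ∈ Finset.Icc 1 (min n₁ m₁), ZZM (m₁ - k) (n₂ + k - 1) * ZZM (m₂ + k - 1) (n₁ - k)

theorem zzm_natDegree (m n : ℕ) : (ZZM m n).natDegree = min m n := by
  apply le_antisymm
  · apply Polynomial.natDegree_sum_le_of_forall_le
    intro j hj
    simp only [Finset.mem_range, Nat.lt_succ_iff] at hj
    calc (Polynomial.C ((m.choose j : ℤ) * (n.choose j : ℤ)) * (1 + Polynomial.X) ^ j).natDegree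
        ≤ (Polynomial.C ((m.choose j : ℤ) * (n.choose j : ℤ))).natDegree
          + ((1 + Polynomial.X : Polynomial ℤ) ^ j).natDegree := natDegree_mul_le
      _ ≤ 0 + j := by
          gcongr
          · exact le_of_eq (natDegree_C _)
          · calc ((1 + Polynomial.X : Polynomial ℤ) ^ j).natDegree
                ≤ j * (1 + Polynomial.X : Polynomial ℤ).natDegree := natDegree_pow_le
              _ ≤ j * 1 := by
                  gcongr
                  rw [add_comm]
                  exact (natDegree_X_add_C (1 : ℤ)).le
              _ = j := mul_one j
      _ ≤ min m n := by omega
  · apply Polynomial.le_natDegree_of_ne_zero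
    rw [ZZM, Polynomial.finset_sum_coeff]
    have hcoef : ∀ j ∈ Finset.range (min m n + 1),
        (Polynomial.C ((m.choose j : ℤ) * (n.choose j : ℤ)) * (1 + Polynomial.X) ^ j).coeff
          (min m n) = if j = min m n then ((m.choose j : ℤ) * (n.choose j : ℤ)) else 0 := by
      intro j hj
      simp only [Finset.mem_range, Nat.lt_succ_iff] at hj
      rw [Polynomial.coeff_C_mul, add_comm, Polynomial.coeff_X_add_one_pow]
      rcases eq_or_lt_of_le hj with h | h
      · simp [h]
      · rw [Nat.choose_eq_zero_of_lt h]
        simp [Nat.ne_of_lt h]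
    rw [Finset.sum_congr rfl hcoef, Finset.sum_ite_eq' _ (min m n)]
    simp only [Finset.mem_range, Nat.lt_succ_iff, le_refl, if_true]
    have h1 : m.choose (min m n) ≠ 0 := (Nat.choose_pos (min_le_left m n)).ne'
    have h2 : (n.choose (min m n)) ≠ 0 := (Nat.choose_pos (min_le_right m n)).ne'
    positivity
end

section
/- For all natural numbers n₁, n₂, m₁, m₂, the evaluation of the ribbon Zhang–Zhang polynomial at 0 collapses, via the Vandermonde-type identity, to the Cyvin–Gutman Kekulé-structure count: (ZZRb(n₁,n₂,m₁,m₂)).eval(0) = ∑_{k=0}^{min(n₁,m₁)} C(m₁+n₂, m₁−k)·C(m₂+n₁, n₁−k). -/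
open Polynomial Finset

lemma sum_choose_mul_eq (m n : ℕ) :
    ∑ j ∈ Finset.range (min m n + 1), m.choose j * n.choose j = (m + n).choose m := by
  have h1 : (m + n).choose m = ∑ i ∈ Finset.range (m + 1), m.choose i * n.choose (m - i) := by
    rw [Nat.add_choose_eq, Finset.Nat.sum_antidiagonal_eq_sum_range_succ_mk]
  have h2 : ∑ i ∈ Finset.range (m + 1), m.choose i * n.choose (m - i)
      = ∑ j ∈ Finset.range (m + 1), m.choose j * n.choose j := by
    rw [← Finset.sum_range_reflect]
    refine Finset.sum_congr rfl fun j hj => ?_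
    rw [Finset.mem_range] at hj
    have hj' : j ≤ m := Nat.lt_succ_iff.mp hj
    rw [Nat.add_sub_cancel, Nat.choose_symm hj', Nat.sub_sub_self hj']
  rw [h1, h2]
  apply Finset.sum_subset
  · exact Finset.range_subset_range.mpr (Nat.succ_le_succ (Nat.min_le_left _ _))
  · intro j hj hj'
    rw [Finset.mem_range] at hj hj'
    have : n < j := by omega
    rw [Nat.choose_eq_zero_of_lt this, mul_zero]

lemma zzm_eval_zero (m n : ℕ) : (ZZM m n).eval 0 = ((m + n).choose m : ℤ) := by
  rw [ZZM, ← sum_choose_mul_eq m n]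
  push_cast
  simp [Polynomial.eval_finset_sum]

theorem zzrb_eval_zero_vandermonde (n₁ n₂ m₁ m₂ : ℕ) :
    (ZZRb n₁ n₂ m₁ m₂).eval 0 =
      ∑ k ∈ Finset.range (min n₁ m₁ + 1),
        ((m₁ + n₂).choose (m₁ - k) : ℤ) * ((m₂ + n₁).choose (n₁ - k) : ℤ) := by
  rw [ZZRb]
  simp only [Polynomial.eval_add, Polynomial.eval_mul, Polynomial.eval_X, zero_mul, add_zero,
    Polynomial.eval_finset_sum]
  refine Finset.sum_congr rfl fun k hk => ?_
  rw [Finset.mem_range] at hk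
  have hk1 : k ≤ m₁ := by omega
  have hk2 : k ≤ n₁ := by omega
  rw [zzm_eval_zero, zzm_eval_zero]
  rw [show m₁ - k + (n₂ + k) = m₁ + n₂ by omega,
    show m₂ + k + (n₁ - k) = m₂ + n₁ by omega,
    show m₂ + k = (m₂ + n₁) - (n₁ - k) by omega,
    Nat.choose_symm (show n₁ - k ≤ m₂ + n₁ by omega)]
end
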